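/- arXiv:2111.12896 — 3 statements merged into one kernel-verified Lean document; each statement's English description precedes it below -/
import Mathlib

section
/- Let W = ∑_{i=1}^k w_i² where w_1, …, w_k are i.i.d. standard normal random variables, and let 0 < ε < 1. Then P(W ≥ (1+ε) k) ≤ ((1+ε) e^{−ε})^{k/2}. -/
/-!
Chernoff bound: for `0 ≤ t < 1/2` a standard Gaussian `w` has `𝔼 exp (t w²) = (1 - 2t)^(-1/2)`,
so by independence `P(W ≥ a) ≤ exp (-t a) (1 - 2t)^(-k/2)`. The choice `t = ε / (2(1 + ε))`,
which minimises this bound at `a = (1 + ε) k`, turns it into `((1 + ε) e^{-ε})^{k/2}`.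
-/

open ProbabilityTheory MeasureTheory Real

lemma integral_exp_mul_sq_gaussianReal {t : ℝ} (ht : t < 1 / 2) :
    ∫ x, exp (t * x ^ 2) ∂gaussianReal 0 1 = (√(1 - 2 * t))⁻¹ := by
  have h1t : 0 < 1 - 2 * t := by linarith
  have hpdf : ∀ x, gaussianPDFReal 0 1 x • exp (t * x ^ 2)
      = (√(2 * π))⁻¹ * exp (-(1 / 2 - t) * x ^ 2) := fun x => by
    simp only [gaussianPDFReal, NNReal.coe_one, mul_one, sub_zero, smul_eq_mul]
    rw [mul_assoc, ← exp_add]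
    ring_nf
  simp_rw [integral_gaussianReal_eq_integral_smul one_ne_zero, hpdf, integral_const_mul,
    integral_gaussian, show π / (1 / 2 - t) = 2 * π / (1 - 2 * t) by field_simp,
    sqrt_div' _ h1t.le]
  have : √(2 * π) ≠ 0 := by positivity
  field_simp

lemma mgf_sq_of_map_eq_gaussianReal {Ω : Type*} [MeasurableSpace Ω] {μ : Measure Ω}
    {X : Ω → ℝ} (hX : μ.map X = gaussianReal 0 1) {t : ℝ} (ht : t < 1 / 2) :
    mgf (fun ω => X ω ^ 2) μ t = (√(1 - 2 * t))⁻¹ := by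
  have hXm : AEMeasurable X μ := .of_map_ne_zero (by simp [hX, IsProbabilityMeasure.ne_zero])
  rw [← integral_exp_mul_sq_gaussianReal ht, ← hX, integral_map hXm (by fun_prop), mgf]

theorem measure_sum_sq_ge_le_of_gaussianReal {Ω ι : Type*} [MeasurableSpace Ω] {μ : Measure Ω}
    [IsProbabilityMeasure μ] [Fintype ι] {X : ι → Ω → ℝ} (hindep : iIndepFun X μ)
    (hX : ∀ i, μ.map (X i) = gaussianReal 0 1) (a : ℝ) {t : ℝ} (ht0 : 0 ≤ t) (ht : t < 1 / 2) :
    μ.real {ω | a ≤ ∑ i, X i ω ^ 2} ≤ exp (-t * a) * (√(1 - 2 * t))⁻¹ ^ Fintype.card ι := by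
  set Y : ι → Ω → ℝ := fun i ω => X i ω ^ 2
  have hYindep : iIndepFun Y μ := hindep.comp (fun _ x => x ^ 2) fun _ => by fun_prop
  have hYmeas : ∀ i, AEMeasurable (Y i) μ := fun i =>
    (AEMeasurable.of_map_ne_zero (by simp [hX i, IsProbabilityMeasure.ne_zero])).pow_const 2
  have hmgf : mgf (∑ i, Y i) μ t = (√(1 - 2 * t))⁻¹ ^ Fintype.card ι := by
    simp only [hYindep.mgf_sum₀ hYmeas, Y, mgf_sq_of_map_eq_gaussianReal (hX _) ht,
      Finset.prod_const, Finset.card_univ]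
  have hint : Integrable (fun ω => exp (t * (∑ i, Y i) ω)) μ :=
    have : 0 < √(1 - 2 * t) := sqrt_pos.2 (by linarith)
    mgf_pos_iff.mp (hmgf ▸ by positivity)
  simpa [Y, hmgf, Finset.sum_apply] using measure_ge_le_exp_mul_mgf a ht0 hint

theorem chi_sq_upper_tail_general {Ω : Type*} [MeasureSpace Ω] {μ : Measure Ω}
    [IsProbabilityMeasure μ] {k : ℕ} (w : Fin k → Ω → ℝ)
    (hindep : iIndepFun w μ)
    (hmap : ∀ i, Measure.map (w i) μ = gaussianReal 0 1)
    (ε : ℝ) (hε0 : 0 < ε) :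
    (μ {ω | (1 + ε) * k ≤ ∑ i, w i ω ^ 2}).toReal ≤
      ((1 + ε) * Real.exp (-ε)) ^ ((k : ℝ) / 2) := by
  have h1ε : 0 < 1 + ε := by linarith
  set t := ε / (2 * (1 + ε)) with ht
  have hbound := measure_sum_sq_ge_le_of_gaussianReal hindep hmap ((1 + ε) * k) (t := t)
    (by positivity) (by rw [div_lt_iff₀ (by positivity)]; linarith)
  have hsqrt : (√(1 - 2 * t))⁻¹ = √(1 + ε) := by
    rw [show 1 - 2 * t = (1 + ε)⁻¹ by rw [ht]; field_simp; ring, sqrt_inv, inv_inv]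
  have hexp : -t * ((1 + ε) * k) = -ε * (k / 2) := by rw [ht]; field_simp
  rw [hsqrt, hexp, Fintype.card_fin] at hbound
  refine hbound.trans_eq ?_
  rw [mul_rpow h1ε.le (exp_pos _).le, ← exp_mul, sqrt_eq_rpow, ← rpow_natCast,
    ← rpow_mul h1ε.le, mul_comm]
  ring_nf

theorem chi_sq_upper_tail {Ω : Type*} [MeasureSpace Ω] {μ : Measure Ω}
    [IsProbabilityMeasure μ] {k : ℕ} (w : Fin k → Ω → ℝ)
    (hmeas : ∀ i, Measurable (w i))
    (hindep : iIndepFun w μ)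
    (hmap : ∀ i, Measure.map (w i) μ = gaussianReal 0 1)
    (ε : ℝ) (hε0 : 0 < ε) (hε1 : ε < 1) :
    (μ {ω | (1 + ε) * k ≤ ∑ i, w i ω ^ 2}).toReal ≤
      ((1 + ε) * Real.exp (-ε)) ^ ((k : ℝ) / 2) :=
  chi_sq_upper_tail_general w hindep hmap ε hε0
end

section
/- Let W = ∑_{i=1}^k w_i² where w_1, …, w_k are i.i.d. standard normal random variables, and let 0 < ε < 1. Then P(W ≤ (1−ε) k) ≤ ((1−ε) e^{ε})^{k/2}. -/
/-!
Chernoff's method for the lower tail: for `t ≤ 0`, `P(W ≤ a) ≤ e^{-ta} E[e^{tW}]`, and the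
moment generating function of a sum of `k` independent squared standard Gaussians is
`(1 - 2t)^{-k/2}`, by a Gaussian integral and independence. The choice
`t = -ε / (2(1 - ε))`, which makes `1 - 2t = (1 - ε)⁻¹`, gives the bound.
-/

open ProbabilityTheory MeasureTheory Real
open scoped NNReal

theorem mgf_sq_gaussianReal {v : ℝ≥0} {t : ℝ} (ht : 2 * v * t < 1) :
    mgf (fun x ↦ x ^ 2) (gaussianReal 0 v) t = (√(1 - 2 * v * t))⁻¹ := by
  rcases eq_or_ne v 0 with rfl | hv
  · simp [gaussianReal_zero_var, mgf]
  have hv' : (0 : ℝ) < v := by positivity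
  have hb : 0 < 1 / (2 * v) - t := by
    rw [sub_pos, lt_div_iff₀ (by positivity)]; linarith
  have hdensity : ∀ x : ℝ, gaussianPDFReal 0 v x • rexp (t * x ^ 2)
      = (√(2 * π * v))⁻¹ * rexp (-(1 / (2 * v) - t) * x ^ 2) := by
    intro x
    rw [gaussianPDFReal, smul_eq_mul, mul_assoc, ← exp_add]
    congr 2
    field_simp
    ring
  rw [mgf, integral_gaussianReal_eq_integral_smul hv]
  simp_rw [hdensity]
  rw [integral_const_mul, integral_gaussian, ← sqrt_inv, ← sqrt_mul (by positivity),
    ← sqrt_inv]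
  congr 1
  field_simp

section SumOfSquares

variable {Ω ι : Type*} [MeasurableSpace Ω] {μ : Measure Ω} [Fintype ι] {X : ι → Ω → ℝ}
  {v : ℝ≥0} {t : ℝ}

theorem mgf_sum_sq_of_iIndepFun_gaussianReal (hindep : iIndepFun X μ)
    (hX : ∀ i, μ.map (X i) = gaussianReal 0 v) (ht : 2 * v * t < 1) :
    mgf (fun ω ↦ ∑ i, X i ω ^ 2) μ t = (1 - 2 * v * t) ^ (-(Fintype.card ι : ℝ) / 2) := by
  have hXmeas i : AEMeasurable (X i) μ := aemeasurable_of_map_neZero (by rw [hX]; infer_instance)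
  have hsq : iIndepFun (fun i ω ↦ X i ω ^ 2) μ := hindep.comp (fun _ x ↦ x ^ 2) (by fun_prop)
  have hmgf_sq i : mgf (fun ω ↦ X i ω ^ 2) μ t = (√(1 - 2 * v * t))⁻¹ := by
    rw [← mgf_sq_gaussianReal ht, ← hX i, mgf_map (hXmeas i) (by fun_prop)]
    rfl
  have hsum : (fun ω ↦ ∑ i, X i ω ^ 2) = ∑ i, fun ω ↦ X i ω ^ 2 := by
    ext; simp
  rw [hsum, hsq.mgf_sum₀ (fun i ↦ (hXmeas i).pow_const 2),
    Finset.prod_congr rfl fun i _ ↦ hmgf_sq i, Finset.prod_const, Finset.card_univ,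
    sqrt_eq_rpow, ← rpow_neg (by linarith), ← rpow_mul_natCast (by linarith)]
  ring_nf

theorem measureReal_sum_sq_le_le_of_iIndepFun_gaussianReal (hindep : iIndepFun X μ)
    (hX : ∀ i, μ.map (X i) = gaussianReal 0 v) (ht : t ≤ 0) (a : ℝ) :
    μ.real {ω | ∑ i, X i ω ^ 2 ≤ a} ≤
      exp (-t * a) * (1 - 2 * v * t) ^ (-(Fintype.card ι : ℝ) / 2) := by
  have := hindep.isProbabilityMeasure
  have ht' : 2 * v * t < 1 := by nlinarith [v.2]
  have hmgf := mgf_sum_sq_of_iIndepFun_gaussianReal hindep hX ht'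
  have hint : Integrable (fun ω ↦ exp (t * ∑ i, X i ω ^ 2)) μ := by
    rw [← mgf_pos_iff, hmgf]
    exact rpow_pos_of_pos (by linarith) _
  rw [← hmgf]
  exact measure_le_le_exp_mul_mgf a ht hint

end SumOfSquares

theorem chi_sq_lower_tail_general {Ω : Type*} [MeasureSpace Ω] {μ : Measure Ω}
    {k : ℕ} (w : Fin k → Ω → ℝ)
    (hindep : iIndepFun w μ)
    (hmap : ∀ i, Measure.map (w i) μ = gaussianReal 0 1)
    (ε : ℝ) (hε0 : 0 < ε) (hε1 : ε < 1) :
    (μ {ω | ∑ i, w i ω ^ 2 ≤ (1 - ε) * k}).toReal ≤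
      ((1 - ε) * Real.exp ε) ^ ((k : ℝ) / 2) := by
  have h1ε : 0 < 1 - ε := by linarith
  set t := -ε / (2 * (1 - ε)) with ht_def
  have ht : t ≤ 0 := div_nonpos_of_nonpos_of_nonneg (by linarith) (by linarith)
  have hone_sub : 1 - 2 * ((1 : ℝ≥0) : ℝ) * t = (1 - ε)⁻¹ := by
    rw [NNReal.coe_one, ht_def]; field_simp; ring
  have hexp : -t * ((1 - ε) * k) = ε * (k / 2) := by
    rw [ht_def]; field_simp
  calc (μ {ω | ∑ i, w i ω ^ 2 ≤ (1 - ε) * k}).toReal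
      ≤ exp (-t * ((1 - ε) * k)) * (1 - 2 * ((1 : ℝ≥0) : ℝ) * t) ^ (-(k : ℝ) / 2) := by
        simpa [Measure.real] using
          measureReal_sum_sq_le_le_of_iIndepFun_gaussianReal hindep hmap ht _
    _ = ((1 - ε) * exp ε) ^ ((k : ℝ) / 2) := by
        rw [hexp, hone_sub, inv_rpow h1ε.le, ← rpow_neg h1ε.le, neg_div, neg_neg, exp_mul,
          mul_rpow h1ε.le (exp_pos ε).le, mul_comm]

theorem chi_sq_lower_tail {Ω : Type*} [MeasureSpace Ω] {μ : Measure Ω}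
    [IsProbabilityMeasure μ] {k : ℕ} (w : Fin k → Ω → ℝ)
    (hmeas : ∀ i, Measurable (w i))
    (hindep : iIndepFun w μ)
    (hmap : ∀ i, Measure.map (w i) μ = gaussianReal 0 1)
    (ε : ℝ) (hε0 : 0 < ε) (hε1 : ε < 1) :
    (μ {ω | ∑ i, w i ω ^ 2 ≤ (1 - ε) * k}).toReal ≤
      ((1 - ε) * Real.exp ε) ^ ((k : ℝ) / 2) :=
  chi_sq_lower_tail_general w hindep hmap ε hε0 hε1
end

section
/- Let W = ∑_{i=1}^k w_i² with w_1, …, w_k i.i.d. standard normal, and 0 < ε < 1. Then P(W ≤ (1−ε) k) ≤ exp(−(k/4)(ε² − ε³)). -/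
/-!
Chernoff bound. The square of a centred Gaussian of variance `v` has moment generating function
`(1 - 2 t v)^(-1/2)`, so by independence `∑ wᵢ²` has `(1 - 2 t)^(-k/2)`, and Markov applied to
`exp (t ∑ wᵢ²)` with `t ≤ 0` bounds the lower tail. At the optimal `t` the bound is
`((1 - ε) e^ε)^(k/2)`, and `log (1 - ε) ≤ -ε - ε²/2` finishes.
-/

open Real ProbabilityTheory MeasureTheory
open scoped NNReal

lemma log_one_sub_le_neg_sub_sq_div_two {x : ℝ} (h0 : 0 ≤ x) (h1 : x < 1) :
    log (1 - x) ≤ -x - x ^ 2 / 2 := by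
  have hseries := hasSum_pow_div_log_of_abs_lt_one (abs_lt.mpr ⟨by linarith, h1⟩)
  have htwo : ∑ i ∈ Finset.range 2, x ^ (i + 1) / ((i : ℝ) + 1) ≤ -log (1 - x) :=
    sum_le_hasSum (L := SummationFilter.unconditional ℕ) _ (fun i _ ↦ by positivity) hseries
  norm_num [Finset.sum_range_succ] at htwo
  linarith

namespace ProbabilityTheory

lemma mgf_sq_gaussianReal {v : ℝ≥0} {t : ℝ} (ht : t * v < 1 / 2) :
    mgf (· ^ 2) (gaussianReal 0 v) t = (√(1 - 2 * t * v))⁻¹ := by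
  rcases eq_or_ne v 0 with rfl | hv
  · simp [mgf]
  have hpdf (x : ℝ) : gaussianPDFReal 0 v x • exp (t * x ^ 2)
      = (√(2 * π * v))⁻¹ * exp (-((2 * (v : ℝ))⁻¹ - t) * x ^ 2) := by
    rw [gaussianPDFReal, smul_eq_mul, mul_assoc, ← exp_add]
    congr 2
    field_simp
    ring
  rw [mgf, integral_gaussianReal_eq_integral_smul hv]
  simp_rw [hpdf]
  rw [integral_const_mul, integral_gaussian, ← sqrt_inv, ← sqrt_mul (by positivity), ← sqrt_inv]
  congr 1
  have h1 : 0 < 1 - 2 * t * v := by linarith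
  field_simp

variable {Ω ι : Type*} [MeasurableSpace Ω] [Fintype ι] {μ : Measure Ω} {w : ι → Ω → ℝ}
  {v : ℝ≥0}

lemma iIndepFun.mgf_sum_sq_of_map_eq_gaussianReal (hindep : iIndepFun w μ)
    (hlaw : ∀ i, μ.map (w i) = gaussianReal 0 v) {t : ℝ} (ht : t * v < 1 / 2) :
    mgf (fun ω ↦ ∑ i, w i ω ^ 2) μ t = (√(1 - 2 * t * v))⁻¹ ^ Fintype.card ι := by
  have hmeas (i : ι) : AEMeasurable (w i) μ :=
    .of_map_ne_zero (by rw [hlaw i]; exact IsProbabilityMeasure.ne_zero _)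
  have hsq : iIndepFun (fun i ω ↦ w i ω ^ 2) μ :=
    hindep.comp (fun _ x ↦ x ^ 2) (fun _ ↦ measurable_id.pow_const 2)
  have hmgf (i : ι) : mgf (fun ω ↦ w i ω ^ 2) μ t = (√(1 - 2 * t * v))⁻¹ := by
    rw [← mgf_sq_gaussianReal ht, ← hlaw i, mgf_map (hmeas i) (by fun_prop)]
    rfl
  have hsum : (fun ω ↦ ∑ i, w i ω ^ 2) = ∑ i, fun ω ↦ w i ω ^ 2 := by
    ext ω; simp
  rw [hsum, hsq.mgf_sum₀ (fun i ↦ (hmeas i).pow_const 2), Finset.prod_congr rfl fun i _ ↦ hmgf i,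
    Finset.prod_const, Finset.card_univ]

lemma iIndepFun.measureReal_sum_sq_le_le_exp_mul (hindep : iIndepFun w μ)
    (hlaw : ∀ i, μ.map (w i) = gaussianReal 0 v) {t : ℝ} (ht : t ≤ 0) (a : ℝ) :
    μ.real {ω | ∑ i, w i ω ^ 2 ≤ a} ≤ exp (-t * a) * (√(1 - 2 * t * v))⁻¹ ^ Fintype.card ι := by
  have := hindep.isProbabilityMeasure
  have htv : t * v < 1 / 2 := by nlinarith [v.coe_nonneg]
  have hmgf := hindep.mgf_sum_sq_of_map_eq_gaussianReal hlaw htv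
  have hint : Integrable (fun ω ↦ exp (t * ∑ i, w i ω ^ 2)) μ := by
    rw [← mgf_pos_iff, hmgf]
    have : 0 < 1 - 2 * t * v := by linarith
    positivity
  exact hmgf ▸ measure_le_le_exp_mul_mgf a ht hint

end ProbabilityTheory

lemma exp_mul_sqrt_one_sub_pow_le {ε : ℝ} (h0 : 0 ≤ ε) (h1 : ε < 1) (k : ℕ) :
    exp (ε * k / 2) * √(1 - ε) ^ k ≤ exp (-(k / 4) * (ε ^ 2 - ε ^ 3)) := by
  have hlog := log_one_sub_le_neg_sub_sq_div_two h0 h1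
  have hsqrt : √(1 - ε) = exp (log (1 - ε) / 2) := by
    rw [← log_sqrt (by linarith), exp_log (sqrt_pos.mpr (by linarith))]
  rw [hsqrt, ← exp_nat_mul, ← exp_add, exp_le_exp]
  have hk : (0 : ℝ) ≤ k := k.cast_nonneg
  nlinarith [mul_le_mul_of_nonneg_left hlog hk, mul_nonneg hk (pow_nonneg h0 3)]

theorem chi_sq_lower_tail_exp_general {Ω : Type*} [MeasureSpace Ω] {μ : Measure Ω}
    {k : ℕ} (w : Fin k → Ω → ℝ)
    (hindep : iIndepFun w μ)
    (hmap : ∀ i, Measure.map (w i) μ = gaussianReal 0 1)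
    (ε : ℝ) (hε0 : 0 < ε) (hε1 : ε < 1) :
    (μ {ω | ∑ i, w i ω ^ 2 ≤ (1 - ε) * k}).toReal ≤
      Real.exp (-((k : ℝ) / 4) * (ε ^ 2 - ε ^ 3)) := by
  have h1ε : 0 < 1 - ε := by linarith
  -- the minimiser of the Chernoff exponent `-t (1 - ε) k - (k / 2) log (1 - 2 t)`
  set t := -ε / (2 * (1 - ε)) with ht
  have ht_nonpos : t ≤ 0 := div_nonpos_of_nonpos_of_nonneg (by linarith) (by linarith)
  have hsqrt : (√(1 - 2 * t))⁻¹ = √(1 - ε) := by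
    rw [← sqrt_inv]; congr 1; rw [ht]; field_simp; ring
  have hexp : -t * ((1 - ε) * k) = ε * k / 2 := by rw [ht]; field_simp
  calc (μ {ω | ∑ i, w i ω ^ 2 ≤ (1 - ε) * k}).toReal
      ≤ exp (-t * ((1 - ε) * k)) * (√(1 - 2 * t * (1 : ℝ≥0)))⁻¹ ^ Fintype.card (Fin k) :=
        hindep.measureReal_sum_sq_le_le_exp_mul hmap ht_nonpos _
    _ = exp (ε * k / 2) * √(1 - ε) ^ k := by
        rw [NNReal.coe_one, mul_one, hsqrt, hexp, Fintype.card_fin]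
    _ ≤ exp (-(k / 4) * (ε ^ 2 - ε ^ 3)) := exp_mul_sqrt_one_sub_pow_le hε0.le hε1 k

theorem chi_sq_lower_tail_exp {Ω : Type*} [MeasureSpace Ω] {μ : Measure Ω}
    [IsProbabilityMeasure μ] {k : ℕ} (w : Fin k → Ω → ℝ)
    (hmeas : ∀ i, Measurable (w i))
    (hindep : iIndepFun w μ)
    (hmap : ∀ i, Measure.map (w i) μ = gaussianReal 0 1)
    (ε : ℝ) (hε0 : 0 < ε) (hε1 : ε < 1) :
    (μ {ω | ∑ i, w i ω ^ 2 ≤ (1 - ε) * k}).toReal ≤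
      Real.exp (-((k : ℝ) / 4) * (ε ^ 2 - ε ^ 3)) :=
  chi_sq_lower_tail_exp_general w hindep hmap ε hε0 hε1
end
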